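/- Let r ≥ 2 and let x = ∏_{j=0}^{r} X (j+1) ∈ R (the top class of H_*(Ratₖ; 𝔽₂) for k = 2^(r+1) − 1). Then (π_5 ⊗ id)(ψ_R(x)) = ((X 0)²·(X 1)⁵·∏_{j=3}^{r} (X 0)^(2^j)) ⊗ (((X 0)³·(X 2)² + (X 0)·(X 1)⁶)·∏_{j=3}^{r} X (j+1)), and this element is nonzero; that is, 5 ∈ S(x). (Here the products over 3 ≤ j ≤ r are empty when r = 2.) -/

import Mathlib

/-!
The projection `π_s ⊗ id` only sees the dimension of the left tensor factor: if `c` is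
homogeneous of dimension `t`, then `(π_s ⊗ id)(z · (c ⊗ d))` is `(π_{s-t} ⊗ id)(z) · (c ⊗ d)`
for `t ≤ s` and `0` otherwise. The left factors of the four terms of `ψ(X (j+1))` have
dimensions `0`, `2^j - 1`, `2^j`, `2^(j+1) - 1` (for `Qʲ(X 0)` because `Q` sends dimension `d`
to `2d + 1`), so for `j ≥ 3` only `(X 0)^(2^j) ⊗ X (j+1)` contributes to dimension `5`; this
gives the induction on `r`. In the base case `r = 2` the two contributions through dimension `2`
of `ψ(X 1) ψ(X 2)` cancel mod `2`. The result is nonzero because its left factor augments to `1`.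
-/

open MvPolynomial TensorProduct

/-- The field 𝔽₂. -/
abbrev F2 : Type := ZMod 2

/-- The polynomial ring `𝔽₂[X 0, X 1, X 2, …]`, used as a model both for
`H_*(∐ₖ Ratₖ; 𝔽₂) = 𝔽₂[g, g⁻¹Qg, Q(g⁻¹Qg), …]` (the "R" model, where `X 0 = g` and
`X (i+1) = Qⁱ(g⁻¹Qg)`) and for `H_*(∐ₙ Bβₙ; 𝔽₂) = 𝔽₂[g, Qg, Q²g, …]`
(the "B" model, where `X i = Qⁱg`). -/
abbrev P : Type := MvPolynomial ℕ F2

/-- Weight of the variable `X i` in the braid model `B`: `wt(Qⁱg) = 2^i`. -/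
def wB : ℕ → ℕ := fun i => 2 ^ i

/-- Dimension of the variable `X i` in the braid model `B`: `dim(Qⁱg) = 2^i - 1`. -/
def dB : ℕ → ℕ := fun i => 2 ^ i - 1

/-- Weight of the variable `X i` in the Rat model `R`: `wt(g) = 1`,
`wt(Qⁱ(g⁻¹Qg)) = 2^i`. -/
def wR : ℕ → ℕ := fun i => match i with
  | 0 => 1
  | j + 1 => 2 ^ j

/-- Dimension of the variable `X i` in the Rat model `R`: `dim(g) = 0`,
`dim(Qⁱ(g⁻¹Qg)) = 2^(i+1) - 1`. -/
def dR : ℕ → ℕ := fun i => match i with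
  | 0 => 0
  | j + 1 => 2 ^ (j + 1) - 1

/-- The weight (resp. dimension) of a monomial with exponent vector `m`: the sum,
with multiplicity, of the weights (resp. dimensions) `w i` of its variables. -/
def mwt (w : ℕ → ℕ) (m : ℕ →₀ ℕ) : ℕ := m.sum fun i e => e * w i

/-- A polynomial is homogeneous of weight (resp. dimension) `n` with respect to the
variable-weight function `w` if every monomial in its support has weight
(resp. dimension) `n`. -/
def Homog (w : ℕ → ℕ) (n : ℕ) (x : P) : Prop := ∀ m ∈ x.support, mwt w m = n

/-- The 𝔽₂-linear span of the monomials of weight `n`. -/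
noncomputable def spanWt (w : ℕ → ℕ) (n : ℕ) : Submodule F2 P :=
  Submodule.span F2 {p : P | ∃ m : ℕ →₀ ℕ, mwt w m = n ∧ p = monomial m 1}

/-- The image `N ⊗ M` inside `P ⊗ P` of two submodules `N, M ⊆ P`. -/
noncomputable def tensorSub (N M : Submodule F2 P) : Submodule F2 (P ⊗[F2] P) :=
  Submodule.span F2 {t : P ⊗[F2] P | ∃ a ∈ N, ∃ b ∈ M, t = a ⊗ₜ[F2] b}

/-- `Q` is the Araki–Kudo operation on the Rat model: the 𝔽₂-linear map with
`Q(X 0) = X 0 · X 1`, `Q(X (i+1)) = X (i+2)`, and the Cartan formula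
`Q(uv) = u²Q(v) + Q(u)v²`. -/
def IsQ (Q : P →ₗ[F2] P) : Prop :=
  Q (X 0) = X 0 * X 1 ∧ (∀ i : ℕ, Q (X (i + 1)) = X (i + 2)) ∧
    ∀ u v : P, Q (u * v) = u ^ 2 * Q v + Q u * v ^ 2

/-- `ψ` is the coproduct on the braid model `B`: the 𝔽₂-algebra map with
`ψ(g) = g ⊗ g` and `ψ(Qⁱg) = g^(2^i) ⊗ Qⁱg + Qⁱg ⊗ g^(2^i)` for `i ≥ 1`. -/
def IsPsiB (ψ : P →ₐ[F2] P ⊗[F2] P) : Prop :=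
  ψ (X 0) = X 0 ⊗ₜ[F2] X 0 ∧
    ∀ i : ℕ, 1 ≤ i →
      ψ (X i) = ((X 0) ^ (2 ^ i)) ⊗ₜ[F2] (X i) + (X i) ⊗ₜ[F2] ((X 0) ^ (2 ^ i))

/-- `ψ` is the coproduct on the Rat model `R` (with Araki–Kudo operation `Q`):
the 𝔽₂-algebra map with `ψ(g) = g ⊗ g`, `ψ(g⁻¹Qg) = g ⊗ g⁻¹Qg + g⁻¹Qg ⊗ g`, and
`ψ(Qⁱ(g⁻¹Qg)) = g^(2^i) ⊗ Qⁱ(g⁻¹Qg) + Qⁱg ⊗ (g⁻¹Qg)^(2^i) + (g⁻¹Qg)^(2^i) ⊗ Qⁱg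
+ Qⁱ(g⁻¹Qg) ⊗ g^(2^i)` for `i ≥ 1`, where `Qⁱg = Qⁱ(X 0)`. -/
def IsPsiR (Q : P →ₗ[F2] P) (ψ : P →ₐ[F2] P ⊗[F2] P) : Prop :=
  ψ (X 0) = X 0 ⊗ₜ[F2] X 0 ∧
  ψ (X 1) = X 0 ⊗ₜ[F2] X 1 + X 1 ⊗ₜ[F2] X 0 ∧
  ∀ i : ℕ, 1 ≤ i →
    ψ (X (i + 1)) =
      ((X 0) ^ (2 ^ i)) ⊗ₜ[F2] (X (i + 1))
      + ((⇑Q)^[i] (X 0)) ⊗ₜ[F2] ((X 1) ^ (2 ^ i))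
      + ((X 1) ^ (2 ^ i)) ⊗ₜ[F2] ((⇑Q)^[i] (X 0))
      + (X (i + 1)) ⊗ₜ[F2] ((X 0) ^ (2 ^ i))

/-- `π` is the family of projections: `π s` is the 𝔽₂-linear endomorphism fixing
every monomial of dimension `s` (with respect to the variable-dimension function
`dimv`) and annihilating every monomial of other dimensions. -/
def IsPi (dimv : ℕ → ℕ) (π : ℕ → P →ₗ[F2] P) : Prop :=
  ∀ (s : ℕ) (m : ℕ →₀ ℕ) (c : F2),
    π s (monomial m c) = if mwt dimv m = s then monomial m c else 0

namespace MvPolynomial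

variable {σ R : Type*} [CommSemiring R]

attribute [local instance] weightedGradedAlgebra in
theorem weightedHomogeneousComponent_mul_of_right {w : σ → ℕ} {b : MvPolynomial σ R} {i : ℕ}
    (hb : b.IsWeightedHomogeneous w i) (a : MvPolynomial σ R) (n : ℕ) :
    weightedHomogeneousComponent w n (a * b) =
      if i ≤ n then weightedHomogeneousComponent w (n - i) a * b else 0 := by
  simpa only [DirectSum.decompose, Equiv.coe_fn_mk, weightedDecomposition.decompose'_apply] using
    DirectSum.coe_decompose_mul_of_right_mem (weightedHomogeneousSubmodule R w) n (a := a) hb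

variable {A : Type*} [Semiring A] [Algebra R A] {w : σ → ℕ}

theorem rTensor_weightedHomogeneousComponent_tmul {a : MvPolynomial σ R} {i : ℕ}
    (ha : a.IsWeightedHomogeneous w i) (n : ℕ) (d : A) :
    (weightedHomogeneousComponent w n).rTensor A (a ⊗ₜ d) = if n = i then a ⊗ₜ d else 0 := by
  classical
  rw [LinearMap.rTensor_tmul, weightedHomogeneousComponent_of_mem ha]
  split_ifs <;> simp

theorem rTensor_weightedHomogeneousComponent_mul_tmul {b : MvPolynomial σ R} {i : ℕ}
    (hb : b.IsWeightedHomogeneous w i) (n : ℕ) (d : A) (z : MvPolynomial σ R ⊗[R] A) :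
    (weightedHomogeneousComponent w n).rTensor A (z * b ⊗ₜ d) =
      if i ≤ n then (weightedHomogeneousComponent w (n - i)).rTensor A z * b ⊗ₜ d else 0 := by
  induction z using TensorProduct.induction_on with
  | zero => simp
  | tmul a c =>
    rw [Algebra.TensorProduct.tmul_mul_tmul, LinearMap.rTensor_tmul, LinearMap.rTensor_tmul,
      weightedHomogeneousComponent_mul_of_right hb]
    split_ifs <;> simp
  | add x y hx hy =>
    rw [add_mul, map_add, hx, hy, map_add, add_mul]
    split_ifs <;> simp

end MvPolynomial

theorem TensorProduct.tmul_ne_zero_of_apply_eq_one {R M N : Type*} [CommSemiring R]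
    [AddCommMonoid M] [AddCommMonoid N] [Module R M] [Module R N] {f : M →ₗ[R] R} {m : M}
    (hm : f m = 1) {n : N} (hn : n ≠ 0) : m ⊗ₜ[R] n ≠ 0 := fun h => hn <| by
  simpa [hm] using congrArg (TensorProduct.lid R N ∘ f.rTensor N) h

theorem mwt_eq_weight (w : ℕ → ℕ) (m : ℕ →₀ ℕ) : mwt w m = Finsupp.weight w m := by
  simp [mwt, Finsupp.weight_apply]

theorem IsPi.eq_weightedHomogeneousComponent {w : ℕ → ℕ} {π : ℕ → P →ₗ[F2] P} (h : IsPi w π)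
    (s : ℕ) : π s = weightedHomogeneousComponent w s := by
  classical
  ext m : 2
  change π s (monomial m 1) = weightedHomogeneousComponent w s (monomial m 1)
  rw [h, weightedHomogeneousComponent_of_mem (isWeightedHomogeneous_monomial w m 1 rfl),
    mwt_eq_weight]
  exact if_congr eq_comm rfl rfl

theorem isWeightedHomogeneous_X_zero_pow (k : ℕ) :
    ((X 0 : P) ^ k).IsWeightedHomogeneous dR 0 := by
  simpa [dR] using (isWeightedHomogeneous_X F2 dR 0).pow k

theorem isWeightedHomogeneous_X_one_pow (k : ℕ) :
    ((X 1 : P) ^ k).IsWeightedHomogeneous dR k := by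
  simpa [dR] using (isWeightedHomogeneous_X F2 dR 1).pow k

namespace IsQ

variable {Q : P →ₗ[F2] P} (hQ : IsQ Q)
include hQ

theorem map_one : Q 1 = 0 := by
  simpa [ZModModule.add_self] using hQ.2.2 1 1

theorem isWeightedHomogeneous_mul {u v : P} {m n : ℕ} (hu : u.IsWeightedHomogeneous dR m)
    (hv : v.IsWeightedHomogeneous dR n) (hQu : (Q u).IsWeightedHomogeneous dR (2 * m + 1))
    (hQv : (Q v).IsWeightedHomogeneous dR (2 * n + 1)) :
    (Q (u * v)).IsWeightedHomogeneous dR (2 * (m + n) + 1) := by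
  have h₁ : (u ^ 2 * Q v).IsWeightedHomogeneous dR (2 * (m + n) + 1) := by
    convert (hu.pow 2).mul hQv using 1; simp only [smul_eq_mul]; ring
  have h₂ : (Q u * v ^ 2).IsWeightedHomogeneous dR (2 * (m + n) + 1) := by
    convert hQu.mul (hv.pow 2) using 1; simp only [smul_eq_mul]; ring
  rw [hQ.2.2]
  exact h₁.add h₂

theorem isWeightedHomogeneous_X (i : ℕ) :
    (Q (X i)).IsWeightedHomogeneous dR (2 * dR i + 1) := by
  cases i with
  | zero =>
    simpa [hQ.1, dR] using (MvPolynomial.isWeightedHomogeneous_X F2 dR 0).mul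
      (MvPolynomial.isWeightedHomogeneous_X F2 dR 1)
  | succ i =>
    rw [hQ.2.1]
    convert MvPolynomial.isWeightedHomogeneous_X F2 dR (i + 2) using 1
    have := Nat.one_le_two_pow (n := i + 1)
    simp only [dR, pow_succ 2 (i + 1)]
    omega

theorem isWeightedHomogeneous_X_pow (i k : ℕ) :
    (Q (X i ^ k)).IsWeightedHomogeneous dR (2 * (k * dR i) + 1) := by
  induction k with
  | zero => simpa [hQ.map_one] using isWeightedHomogeneous_zero F2 dR 1
  | succ k ih =>
    have hXi := MvPolynomial.isWeightedHomogeneous_X F2 dR i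
    rw [pow_succ]
    convert hQ.isWeightedHomogeneous_mul (by simpa using hXi.pow k) hXi ih
      (hQ.isWeightedHomogeneous_X i) using 2
    ring

theorem isWeightedHomogeneous_monomial (d : ℕ →₀ ℕ) :
    (Q (monomial d 1)).IsWeightedHomogeneous dR (2 * Finsupp.weight dR d + 1) := by
  induction d using Finsupp.induction_linear with
  | zero => simpa [hQ.map_one] using isWeightedHomogeneous_zero F2 dR 1
  | add f g hf hg =>
    rw [← mul_one (1 : F2), ← monomial_mul, map_add]
    exact hQ.isWeightedHomogeneous_mul (MvPolynomial.isWeightedHomogeneous_monomial _ _ _ rfl)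
      (MvPolynomial.isWeightedHomogeneous_monomial _ _ _ rfl) hf hg
  | single i k =>
    simpa [← X_pow_eq_monomial, Finsupp.weight_single] using hQ.isWeightedHomogeneous_X_pow i k

theorem isWeightedHomogeneous {p : P} {n : ℕ} (hp : p.IsWeightedHomogeneous dR n) :
    (Q p).IsWeightedHomogeneous dR (2 * n + 1) := by
  induction hp using IsWeightedHomogeneous.induction_on with
  | zero => simpa using isWeightedHomogeneous_zero F2 dR _
  | add p q _ _ hp hq => simpa using hp.add hq
  | monomial d r hd =>
    rw [← mul_one r, ← smul_eq_mul, ← smul_monomial, map_smul, smul_eq_C_mul, ← hd]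
    exact (hQ.isWeightedHomogeneous_monomial d).C_mul r

theorem isWeightedHomogeneous_iterate (n : ℕ) :
    ((⇑Q)^[n] (X 0)).IsWeightedHomogeneous dR (2 ^ n - 1) := by
  induction n with
  | zero => exact MvPolynomial.isWeightedHomogeneous_X F2 dR 0
  | succ n ih =>
    rw [Function.iterate_succ_apply']
    convert hQ.isWeightedHomogeneous ih using 1
    have := Nat.one_le_two_pow (n := n)
    rw [pow_succ]
    omega

theorem iterate_two : (⇑Q)^[2] (X 0) = X 0 ^ 2 * X 2 + X 0 * X 1 ^ 3 := by
  rw [Function.iterate_succ_apply', Function.iterate_one, hQ.1, hQ.2.2, hQ.2.1, hQ.1]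
  ring

end IsQ

local notation "π⊗[" s "]" => LinearMap.rTensor P (weightedHomogeneousComponent dR s)

namespace IsPsiR

variable {Q : P →ₗ[F2] P} {ψ : P →ₐ[F2] P ⊗[F2] P} (hψ : IsPsiR Q ψ)
include hψ

theorem rTensor_component_X_one (s : ℕ) :
    π⊗[s] (ψ (X 1)) =
      (if s = 0 then X 0 ⊗ₜ[F2] X 1 else 0) + (if s = 1 then X 1 ⊗ₜ[F2] X 0 else 0) := by
  rw [hψ.2.1, map_add, rTensor_weightedHomogeneousComponent_tmul (isWeightedHomogeneous_X F2 dR 0),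
    rTensor_weightedHomogeneousComponent_tmul (isWeightedHomogeneous_X F2 dR 1)]
  rfl

theorem rTensor_component_mul_X_succ (hQ : IsQ Q) {j : ℕ} (hj : 1 ≤ j) (s : ℕ)
    (z : P ⊗[F2] P) :
    π⊗[s] (z * ψ (X (j + 1))) =
      π⊗[s] z * (X 0 ^ 2 ^ j) ⊗ₜ[F2] X (j + 1)
      + (if 2 ^ j - 1 ≤ s then
          π⊗[s - (2 ^ j - 1)] z * (⇑Q)^[j] (X 0) ⊗ₜ[F2] (X 1 ^ 2 ^ j) else 0)
      + (if 2 ^ j ≤ s then π⊗[s - 2 ^ j] z * (X 1 ^ 2 ^ j) ⊗ₜ[F2] (⇑Q)^[j] (X 0) else 0)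
      + (if 2 ^ (j + 1) - 1 ≤ s then
          π⊗[s - (2 ^ (j + 1) - 1)] z * X (j + 1) ⊗ₜ[F2] (X 0 ^ 2 ^ j) else 0) := by
  rw [hψ.2.2 j hj, mul_add, mul_add, mul_add, map_add, map_add, map_add,
    rTensor_weightedHomogeneousComponent_mul_tmul (isWeightedHomogeneous_X_zero_pow _),
    rTensor_weightedHomogeneousComponent_mul_tmul (hQ.isWeightedHomogeneous_iterate j),
    rTensor_weightedHomogeneousComponent_mul_tmul (isWeightedHomogeneous_X_one_pow _),
    rTensor_weightedHomogeneousComponent_mul_tmul (isWeightedHomogeneous_X F2 dR (j + 1))]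
  simp only [zero_le, if_true, Nat.sub_zero]
  rfl

theorem rTensor_component_five_map_X_one_mul_X_two_mul_X_three (hQ : IsQ Q) :
    π⊗[5] (ψ (X 1 * X 2 * X 3)) =
      (X 0 ^ 2 * X 1 ^ 5) ⊗ₜ[F2] (X 0 ^ 3 * X 2 ^ 2 + X 0 * X 1 ^ 6) := by
  have hψ₂ := hψ.rTensor_component_mul_X_succ hQ (j := 1) le_rfl
  have h₅ : π⊗[5] (ψ (X 1) * ψ (X 2)) = 0 := by
    simp [hψ₂, hψ.rTensor_component_X_one]
  have h₂ : π⊗[2] (ψ (X 1) * ψ (X 2)) = 0 := by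
    simp only [hψ₂, hψ.rTensor_component_X_one, hQ.1, Function.iterate_one,
      Algebra.TensorProduct.tmul_mul_tmul, OfNat.ofNat_ne_zero, OfNat.ofNat_ne_one, one_ne_zero,
      zero_ne_one, ↓reduceIte, zero_add, add_zero, zero_mul, pow_one, Nat.reduceAdd,
      Nat.add_one_sub_one, Nat.one_le_ofNat, Std.le_refl, tsub_self, Nat.reducePow,
      Nat.reduceLeDiff]
    rw [show (X 1 * (X 0 * X 1) : P) = X 0 * X 1 ^ 2 by ring]
    exact ZModModule.add_self _
  have h₁ : π⊗[1] (ψ (X 1) * ψ (X 2)) = (X 0 ^ 2 * X 1) ⊗ₜ[F2] (X 0 * X 2 + X 1 ^ 3) := by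
    simp only [hψ₂, hψ.rTensor_component_X_one, hQ.1, Function.iterate_one,
      Algebra.TensorProduct.tmul_mul_tmul, one_ne_zero, zero_ne_one, ↓reduceIte, zero_add,
      add_zero, pow_one, Nat.reduceAdd, Nat.add_one_sub_one, Std.le_refl, tsub_self,
      Nat.not_ofNat_le_one, Nat.reducePow]
    rw [tmul_add]
    congr 1 <;> congr 1 <;> ring
  rw [map_mul ψ, map_mul ψ, hψ.rTensor_component_mul_X_succ hQ (j := 2) (by norm_num)]
  simp only [h₅, h₂, h₁, hQ.iterate_two, Algebra.TensorProduct.tmul_mul_tmul, zero_mul,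
    zero_add, add_zero, ↓reduceIte, Nat.reducePow, Nat.reduceAdd, Nat.add_one_sub_one,
    Nat.reduceLeDiff, Nat.reduceSub]
  congr 1
  · ring
  · linear_combination (X 0 ^ 2 * X 1 ^ 3 * X 2 : P) * CharTwo.two_eq_zero (R := P)

theorem rTensor_component_five_map_prod_X (hQ : IsQ Q) {r : ℕ} (hr : 2 ≤ r) :
    π⊗[5] (ψ (∏ j ∈ Finset.range (r + 1), X (j + 1))) =
      (X 0 ^ 2 * X 1 ^ 5 * ∏ j ∈ Finset.Icc 3 r, X 0 ^ 2 ^ j) ⊗ₜ[F2]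
        ((X 0 ^ 3 * X 2 ^ 2 + X 0 * X 1 ^ 6) * ∏ j ∈ Finset.Icc 3 r, X (j + 1)) := by
  induction r, hr using Nat.le_induction with
  | base =>
    simpa [Finset.prod_range_succ] using
      hψ.rTensor_component_five_map_X_one_mul_X_two_mul_X_three hQ
  | succ n hn ih =>
    have h8 : 8 ≤ 2 ^ (n + 1) :=
      calc 8 = 2 ^ 3 := rfl
        _ ≤ 2 ^ (n + 1) := Nat.pow_le_pow_right two_pos (by omega)
    rw [Finset.prod_range_succ, map_mul ψ, hψ.rTensor_component_mul_X_succ hQ (by omega), ih,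
      if_neg (by omega), if_neg (by omega), if_neg (by rw [pow_succ]; omega), add_zero, add_zero,
      add_zero, Algebra.TensorProduct.tmul_mul_tmul, Finset.prod_Icc_succ_top (by omega),
      Finset.prod_Icc_succ_top (by omega)]
    simp only [mul_assoc]

end IsPsiR

theorem X_zero_pow_three_mul_X_two_sq_add_X_zero_mul_X_one_pow_six_ne_zero :
    (X 0 ^ 3 * X 2 ^ 2 + X 0 * X 1 ^ 6 : P) ≠ 0 := fun h => by
  simpa using congrArg (eval fun i => if i = 2 then (0 : F2) else 1) h

/-- Let `r ≥ 2` and `x = ∏_{j=0}^{r} X (j+1) ∈ R` (the top class of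
`H_*(Ratₖ; 𝔽₂)` for `k = 2^(r+1) − 1`).  Then `(π_5 ⊗ id)(ψ_R(x))` equals the stated
nonzero elementary tensor, i.e. `5 ∈ S(x)` (the products over `3 ≤ j ≤ r` are empty
when `r = 2`). -/
theorem psiR_dim_five_component_nonzero (r : ℕ) (hr : 2 ≤ r)
    (Q : P →ₗ[F2] P) (hQ : IsQ Q)
    (ψ : P →ₐ[F2] P ⊗[F2] P) (hψ : IsPsiR Q ψ)
    (π : ℕ → P →ₗ[F2] P) (hπ : IsPi dR π)
    (x : P) (hx : x = ∏ j ∈ Finset.range (r + 1), X (j + 1)) :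
    TensorProduct.map (π 5) (LinearMap.id : P →ₗ[F2] P) (ψ x) =
      ((X 0) ^ 2 * (X 1) ^ 5 * ∏ j ∈ Finset.Icc 3 r, (X 0) ^ (2 ^ j)) ⊗ₜ[F2]
        (((X 0) ^ 3 * (X 2) ^ 2 + X 0 * (X 1) ^ 6) * ∏ j ∈ Finset.Icc 3 r, X (j + 1)) ∧
    (((X 0) ^ 2 * (X 1) ^ 5 * ∏ j ∈ Finset.Icc 3 r, (X 0) ^ (2 ^ j)) ⊗ₜ[F2]
        (((X 0) ^ 3 * (X 2) ^ 2 + X 0 * (X 1) ^ 6) * ∏ j ∈ Finset.Icc 3 r, X (j + 1)) : P ⊗[F2] P) ≠ 0 := by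
  obtain rfl : π = fun s => weightedHomogeneousComponent dR s :=
    funext hπ.eq_weightedHomogeneousComponent
  subst hx
  refine ⟨hψ.rTensor_component_five_map_prod_X hQ hr, ?_⟩
  refine TensorProduct.tmul_ne_zero_of_apply_eq_one (f := (aeval fun _ => (1 : F2)).toLinearMap)
    (by simp) (mul_ne_zero X_zero_pow_three_mul_X_two_sq_add_X_zero_mul_X_one_pow_six_ne_zero ?_)
  exact Finset.prod_ne_zero_iff.mpr fun j _ => X_ne_zero _
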